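/- arXiv:2312.15394 — 5 statements merged into one kernel-verified Lean document; each statement's English description precedes it below -/
import Mathlib

section
/- Let A, B be n×n complex positive definite matrices. If A ⪯ B in the near order, then λ_i(A) ≤ λ_i(B) for every i = 1, …, n, where eigenvalues are listed in nonincreasing order. -/
/-!
Let `C = A⁻¹ ♯ B`. It is Hermitian and solves the Riccati equation `C A C = B`, and `I ≤ C`
gives `I ≤ C²`. So the substitution `x = C y` carries the quadratic form of `B` to that of `A`,
`y* B y = x* A x`, without shrinking vectors: `‖y‖ ≤ ‖x‖`. By a Courant–Fischer dimension count
there is `y ≠ 0` such that `x` is orthogonal to the eigenvectors of `A` with eigenvalues below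
`λᵢ(A)` and `y` is orthogonal to those of `B` above `λᵢ(B)`; then
`λᵢ(A) ‖y‖² ≤ λᵢ(A) ‖x‖² ≤ x* A x = y* B y ≤ λᵢ(B) ‖y‖²`.
-/

open scoped ComplexOrder Matrix

noncomputable section

/-- Real power of a (positive definite) matrix via the continuous functional calculus. -/
def mpow {n : ℕ} (A : Matrix (Fin n) (Fin n) ℂ) (t : ℝ) : Matrix (Fin n) (Fin n) ℂ :=
  cfc (fun x : ℝ => x ^ t) A

/-- The matrix logarithm of a (positive definite) matrix via the continuous functional calculus. -/
def mlog {n : ℕ} (A : Matrix (Fin n) (Fin n) ℂ) : Matrix (Fin n) (Fin n) ℂ :=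
  cfc Real.log A

/-- The metric geometric mean `A ♯ₜ B = A^{1/2} (A^{-1/2} B A^{-1/2})^t A^{1/2}`.
`A ♯ B` is `gmean A B (1/2)`. -/
def gmean {n : ℕ} (A B : Matrix (Fin n) (Fin n) ℂ) (t : ℝ) : Matrix (Fin n) (Fin n) ℂ :=
  mpow A (1/2) * mpow (mpow A (-(1/2)) * B * mpow A (-(1/2))) t * mpow A (1/2)

/-- The Loewner order: `A ≤ B` iff `B - A` is positive semidefinite. -/
def LoewnerLE {n : ℕ} (A B : Matrix (Fin n) (Fin n) ℂ) : Prop :=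
  (B - A).PosSemidef

/-- The near order: `A ⪯ B` iff `I ≤ A⁻¹ ♯ B` in the Loewner order. -/
def NearLE {n : ℕ} (A B : Matrix (Fin n) (Fin n) ℂ) : Prop :=
  LoewnerLE 1 (gmean A⁻¹ B (1/2))

/-- The spectral geometric mean `A ♮ₜ B = (A⁻¹ ♯ B)^t A (A⁻¹ ♯ B)^t`. -/
def smean {n : ℕ} (A B : Matrix (Fin n) (Fin n) ℂ) (t : ℝ) : Matrix (Fin n) (Fin n) ℂ :=
  mpow (gmean A⁻¹ B (1/2)) t * A * mpow (gmean A⁻¹ B (1/2)) t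

/-- The Wasserstein mean `A ◇ₜ B = [(1-t)I + t(A⁻¹ ♯ B)] A [(1-t)I + t(A⁻¹ ♯ B)]`. -/
def wmean {n : ℕ} (A B : Matrix (Fin n) (Fin n) ℂ) (t : ℝ) : Matrix (Fin n) (Fin n) ℂ :=
  (((1 - t : ℝ) : ℂ) • (1 : Matrix (Fin n) (Fin n) ℂ) + ((t : ℝ) : ℂ) • gmean A⁻¹ B (1/2)) * A *
    (((1 - t : ℝ) : ℂ) • (1 : Matrix (Fin n) (Fin n) ℂ) + ((t : ℝ) : ℂ) • gmean A⁻¹ B (1/2))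

/-- The arithmetic mean `A ∇ₜ B = (1-t)A + tB`. -/
def amean {n : ℕ} (A B : Matrix (Fin n) (Fin n) ℂ) (t : ℝ) : Matrix (Fin n) (Fin n) ℂ :=
  ((1 - t : ℝ) : ℂ) • A + ((t : ℝ) : ℂ) • B

/-- The matrix absolute value `|X| = (XᴴX)^{1/2}`. -/
def matAbs {n : ℕ} (X : Matrix (Fin n) (Fin n) ℂ) : Matrix (Fin n) (Fin n) ℂ :=
  mpow (Xᴴ * X) (1/2)

/-- The eigenvalues of a Hermitian matrix listed in nonincreasing order:
`eigDesc hA i` is `λ_{i+1}(A)`, so `eigDesc hA 0 = λ₁(A) ≥ eigDesc hA 1 = λ₂(A) ≥ ⋯`. -/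
def eigDesc {n : ℕ} {A : Matrix (Fin n) (Fin n) ℂ} (hA : A.IsHermitian) : Fin n → ℝ :=
  fun i => (hA.eigenvalues ∘ Tuple.sort hA.eigenvalues) i.rev

namespace Tuple

variable {R : Type*} [CommRing R] [LinearOrder R] [IsStrictOrderedRing R] {n : ℕ}
  (μ : Fin n → R) {w : Fin n → R} {m : Fin n}

theorem sort_mul_sum_le_sum_mul (hw : ∀ j, 0 ≤ w j) (hm : ∀ k < m, w (sort μ k) = 0) :
    μ (sort μ m) * ∑ j, w j ≤ ∑ j, μ j * w j := by
  rw [← Equiv.sum_comp (sort μ) (fun j => μ j * w j), ← Equiv.sum_comp (sort μ) w,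
    Finset.mul_sum]
  refine Finset.sum_le_sum fun k _ => ?_
  rcases lt_or_ge k m with hk | hk
  · simp [hm k hk]
  · exact mul_le_mul_of_nonneg_right (monotone_sort μ hk) (hw _)

theorem sum_mul_le_sort_mul_sum (hw : ∀ j, 0 ≤ w j) (hm : ∀ k, m < k → w (sort μ k) = 0) :
    ∑ j, μ j * w j ≤ μ (sort μ m) * ∑ j, w j := by
  rw [← Equiv.sum_comp (sort μ) (fun j => μ j * w j), ← Equiv.sum_comp (sort μ) w,
    Finset.mul_sum]
  refine Finset.sum_le_sum fun k _ => ?_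
  rcases le_or_gt k m with hk | hk
  · exact mul_le_mul_of_nonneg_right (monotone_sort μ hk) (hw _)
  · simp [hm k hk]

end Tuple

theorem exists_ne_zero_forall_apply_eq_zero_of_card_lt_finrank {K V ι : Type*} [Field K]
    [AddCommGroup V] [Module K V] [FiniteDimensional K V] [Fintype ι] (φ : ι → V →ₗ[K] K)
    (h : Fintype.card ι < Module.finrank K V) : ∃ v ≠ 0, ∀ i, φ i v = 0 := by
  have hker : LinearMap.ker (LinearMap.pi φ) ≠ ⊥ :=
    LinearMap.ker_ne_bot_of_finrank_lt (by simpa using h)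
  obtain ⟨v, hv, hv0⟩ := Submodule.exists_mem_ne_zero_of_ne_bot hker
  exact ⟨v, hv0, fun i => congrFun (LinearMap.mem_ker.mp hv) i⟩

theorem mul_mul_mul_mul_self_eq {M : Type*} [Monoid M] {P Q S B : M} (hPQ : P * Q = 1)
    (hQP : Q * P = 1) (hS : S * S = Q * B * Q) : P * S * P * (Q * Q) * (P * S * P) = B :=
  calc P * S * P * (Q * Q) * (P * S * P) = P * S * (P * Q) * (Q * P) * S * P := by
        simp only [mul_assoc]
    _ = P * (Q * B * Q) * P := by rw [hPQ, hQP, ← hS]; simp only [mul_one, mul_assoc]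
    _ = B := by simp only [mul_assoc, hQP, mul_one, ← mul_assoc P Q, hPQ, one_mul]

namespace Matrix

theorem star_dotProduct_self_eq_sum_normSq {ι : Type*} [Fintype ι] (v : ι → ℂ) :
    star v ⬝ᵥ v = ((∑ j, Complex.normSq (v j) : ℝ) : ℂ) := by
  push_cast
  exact Finset.sum_congr rfl fun j _ => (Complex.normSq_eq_conj_mul_self).symm

theorem star_dotProduct_self_mulVec_unitary {ι : Type*} [Fintype ι] [DecidableEq ι]
    (U : unitaryGroup ι ℂ) (v : ι → ℂ) :
    star ((U : Matrix ι ι ℂ) *ᵥ v) ⬝ᵥ ((U : Matrix ι ι ℂ) *ᵥ v) = star v ⬝ᵥ v := by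
  rw [star_mulVec, dotProduct_mulVec, vecMul_vecMul, ← star_eq_conjTranspose,
    Unitary.coe_star_mul_self, vecMul_one]

namespace IsHermitian

section

variable {ι : Type*} [Fintype ι] [DecidableEq ι] {M : Matrix ι ι ℂ} (hM : M.IsHermitian)

def eigenCoord (v : ι → ℂ) : ι → ℂ :=
  star (hM.eigenvectorUnitary : Matrix ι ι ℂ) *ᵥ v

theorem star_dotProduct_self_eq_sum_eigenCoord (v : ι → ℂ) :
    star v ⬝ᵥ v = ((∑ j, Complex.normSq (hM.eigenCoord v j) : ℝ) : ℂ) := by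
  rw [← star_dotProduct_self_eq_sum_normSq, eigenCoord, ← Unitary.coe_star,
    star_dotProduct_self_mulVec_unitary]

theorem star_dotProduct_mulVec_eq_sum_eigenCoord (v : ι → ℂ) :
    star v ⬝ᵥ (M *ᵥ v) =
      ((∑ j, hM.eigenvalues j * Complex.normSq (hM.eigenCoord v j) : ℝ) : ℂ) := by
  set U := (hM.eigenvectorUnitary : Matrix ι ι ℂ)
  have hsw : star (hM.eigenCoord v) = star v ᵥ* U := by
    rw [eigenCoord, star_mulVec, star_eq_conjTranspose, conjTranspose_conjTranspose]
  conv_lhs => rw [hM.spectral_theorem, Unitary.conjStarAlgAut_apply]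
  rw [← mulVec_mulVec, ← mulVec_mulVec, dotProduct_mulVec, ← hsw, ← eigenCoord]
  push_cast
  simp only [dotProduct, mulVec_diagonal, Function.comp_apply]
  refine Finset.sum_congr rfl fun j _ => ?_
  rw [Complex.normSq_eq_conj_mul_self, Pi.star_apply, Complex.star_def, mul_left_comm]
  norm_cast

end

section

variable {n : ℕ} {M : Matrix (Fin n) (Fin n) ℂ} (hM : M.IsHermitian) {v : Fin n → ℂ} {m : Fin n}

theorem sort_eigenvalues_mul_le_star_dotProduct_mulVec
    (hv : ∀ k < m, hM.eigenCoord v (Tuple.sort hM.eigenvalues k) = 0) :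
    (hM.eigenvalues (Tuple.sort hM.eigenvalues m) : ℂ) * (star v ⬝ᵥ v) ≤ star v ⬝ᵥ (M *ᵥ v) := by
  rw [hM.star_dotProduct_self_eq_sum_eigenCoord, hM.star_dotProduct_mulVec_eq_sum_eigenCoord,
    ← Complex.ofReal_mul, Complex.real_le_real]
  exact Tuple.sort_mul_sum_le_sum_mul _ (fun _ => Complex.normSq_nonneg _)
    fun k hk => by simp [hv k hk]

theorem star_dotProduct_mulVec_le_sort_eigenvalues_mul
    (hv : ∀ k, m < k → hM.eigenCoord v (Tuple.sort hM.eigenvalues k) = 0) :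
    star v ⬝ᵥ (M *ᵥ v) ≤ (hM.eigenvalues (Tuple.sort hM.eigenvalues m) : ℂ) * (star v ⬝ᵥ v) := by
  rw [hM.star_dotProduct_self_eq_sum_eigenCoord, hM.star_dotProduct_mulVec_eq_sum_eigenCoord,
    ← Complex.ofReal_mul, Complex.real_le_real]
  exact Tuple.sum_mul_le_sort_mul_sum _ (fun _ => Complex.normSq_nonneg _)
    fun k hk => by simp [hv k hk]

end

end IsHermitian

theorem PosSemidef.conjTranspose_mul_self_sub_one {ι 𝕜 : Type*} [Fintype ι] [DecidableEq ι]
    [RCLike 𝕜] {C : Matrix ι ι 𝕜} (hC : C.IsHermitian) (h : (C - 1).PosSemidef) :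
    (Cᴴ * C - 1).PosSemidef := by
  have key : Cᴴ * C - 1 = (C - 1)ᴴ * (C - 1) + ((C - 1) + (C - 1)) := by
    rw [conjTranspose_sub, conjTranspose_one, hC.eq]
    noncomm_ring
  rw [key]
  exact (posSemidef_conjTranspose_mul_self _).add (h.add h)

section

variable {n : ℕ}

theorem eigDesc_le_eigDesc_of_conjTranspose_mul_mul_eq {A B C : Matrix (Fin n) (Fin n) ℂ}
    (hA : A.PosSemidef) (hB : B.IsHermitian) (hCAC : Cᴴ * A * C = B)
    (hC : (Cᴴ * C - 1).PosSemidef) (i : Fin n) : eigDesc hA.1 i ≤ eigDesc hB i := by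
  set σ := Tuple.sort hA.1.eigenvalues
  set τ := Tuple.sort hB.eigenvalues
  -- `n - 1` linear conditions: `C y` has no component along the eigenvectors of `A` below
  -- `λᵢ(A)`, and `y` none along those of `B` above `λᵢ(B)`.
  obtain ⟨y, hy0, hy⟩ := exists_ne_zero_forall_apply_eq_zero_of_card_lt_finrank
    (fun k : {k : Fin n // k ≠ i.rev} => if k.1 < i.rev
      then LinearMap.proj (σ k) ∘ₗ (star (hA.1.eigenvectorUnitary : Matrix _ _ ℂ) * C).mulVecLin
      else LinearMap.proj (τ k) ∘ₗ (star (hB.eigenvectorUnitary : Matrix _ _ ℂ)).mulVecLin)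
    (by simp [Fintype.card_subtype_compl]; have := i.pos; omega)
  set x := C *ᵥ y
  have hx : ∀ k < i.rev, hA.1.eigenCoord x (σ k) = 0 := fun k hk => by
    simpa [hk, IsHermitian.eigenCoord, x, mulVec_mulVec] using hy ⟨k, hk.ne⟩
  have hy' : ∀ k, i.rev < k → hB.eigenCoord y (τ k) = 0 := fun k hk => by
    simpa [not_lt_of_gt hk, IsHermitian.eigenCoord] using hy ⟨k, hk.ne'⟩
  have hyy : 0 < star y ⬝ᵥ y := dotProduct_star_self_pos_iff.mpr hy0
  have hnorm : star y ⬝ᵥ y ≤ star x ⬝ᵥ x := by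
    have := hC.dotProduct_mulVec_nonneg y
    rwa [sub_mulVec, dotProduct_sub, one_mulVec, sub_nonneg, ← mulVec_mulVec, dotProduct_mulVec,
      ← star_mulVec] at this
  have hquad : star x ⬝ᵥ (A *ᵥ x) = star y ⬝ᵥ (B *ᵥ y) := by
    rw [← hCAC, star_mulVec, dotProduct_mulVec, vecMul_vecMul, ← dotProduct_mulVec,
      mulVec_mulVec]
  have hμ : (0 : ℂ) ≤ eigDesc hA.1 i := Complex.zero_le_real.mpr (hA.eigenvalues_nonneg _)
  have key : (eigDesc hA.1 i : ℂ) * (star y ⬝ᵥ y) ≤ eigDesc hB i * (star y ⬝ᵥ y) :=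
    calc (eigDesc hA.1 i : ℂ) * (star y ⬝ᵥ y)
        ≤ eigDesc hA.1 i * (star x ⬝ᵥ x) := mul_le_mul_of_nonneg_left hnorm hμ
      _ ≤ star x ⬝ᵥ (A *ᵥ x) := hA.1.sort_eigenvalues_mul_le_star_dotProduct_mulVec hx
      _ = star y ⬝ᵥ (B *ᵥ y) := hquad
      _ ≤ eigDesc hB i * (star y ⬝ᵥ y) := hB.star_dotProduct_mulVec_le_sort_eigenvalues_mul hy'
  exact_mod_cast le_of_mul_le_mul_right key hyy

end

section

variable {n : ℕ} {A : Matrix (Fin n) (Fin n) ℂ}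

theorem isHermitian_mpow (A : Matrix (Fin n) (Fin n) ℂ) (t : ℝ) : (mpow A t).IsHermitian :=
  cfc_predicate _ A

theorem mpow_zero (hA : A.IsHermitian) : mpow A 0 = 1 := by
  rw [mpow, cfc_congr fun x _ => Real.rpow_zero x]
  exact cfc_const_one ℝ A

theorem mpow_one (hA : A.IsHermitian) : mpow A 1 = A := by
  rw [mpow, cfc_congr fun x _ => Real.rpow_one x]
  exact cfc_id' ℝ A

open scoped MatrixOrder in
theorem mpow_add (hA : A.PosDef) (s t : ℝ) : mpow A (s + t) = mpow A s * mpow A t := by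
  rw [mpow, mpow, mpow, ← cfc_mul _ _ A (A.finite_real_spectrum.continuousOn _)
    (A.finite_real_spectrum.continuousOn _)]
  exact cfc_congr fun x hx => Real.rpow_add (hA.isStrictlyPositive.spectrum_pos hx) s t

theorem mpow_neg_one (hA : A.PosDef) : mpow A (-1) = A⁻¹ := by
  refine (inv_eq_right_inv ?_).symm
  calc A * mpow A (-1) = mpow A 1 * mpow A (-1) := by rw [mpow_one hA.1]
    _ = 1 := by rw [← mpow_add hA, add_neg_cancel, mpow_zero hA.1]

theorem mpow_mul_mpow_neg (hA : A.PosDef) (t : ℝ) : mpow A t * mpow A (-t) = 1 := by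
  rw [← mpow_add hA, add_neg_cancel, mpow_zero hA.1]

theorem isHermitian_gmean (A B : Matrix (Fin n) (Fin n) ℂ) (t : ℝ) :
    (gmean A B t).IsHermitian := by
  have := isHermitian_mul_mul_conjTranspose (mpow A (1/2))
    (isHermitian_mpow (mpow A (-(1/2)) * B * mpow A (-(1/2))) t)
  rwa [(isHermitian_mpow A (1/2)).eq] at this

theorem gmean_inv_mul_mul_gmean_inv {B : Matrix (Fin n) (Fin n) ℂ} (hA : A.PosDef)
    (hB : B.PosDef) : gmean A⁻¹ B (1/2) * A * gmean A⁻¹ B (1/2) = B := by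
  have hA' := hA.inv
  set Q := mpow A⁻¹ (-(1/2))
  have hPQ : mpow A⁻¹ (1/2) * Q = 1 := mpow_mul_mpow_neg hA' _
  have hQP : Q * mpow A⁻¹ (1/2) = 1 := by
    simpa only [neg_neg] using mpow_mul_mpow_neg hA' (-(1/2))
  have hQQ : Q * Q = A := by
    rw [← mpow_add hA', show -(1/2) + -(1/2) = (-1 : ℝ) by norm_num, mpow_neg_one hA',
      nonsing_inv_nonsing_inv A ((isUnit_iff_isUnit_det A).mp hA.isUnit)]
  have hM : (Q * B * Q).PosDef := by
    have := (IsUnit.posDef_star_left_conjugate_iff (IsUnit.of_mul_eq_one _ hQP)).mpr hB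
    rwa [star_eq_conjTranspose, (isHermitian_mpow _ _).eq] at this
  have hS : mpow (Q * B * Q) (1/2) * mpow (Q * B * Q) (1/2) = Q * B * Q := by
    rw [← mpow_add hM, add_halves, mpow_one hM.1]
  calc gmean A⁻¹ B (1/2) * A * gmean A⁻¹ B (1/2)
      = mpow A⁻¹ (1/2) * mpow (Q * B * Q) (1/2) * mpow A⁻¹ (1/2) * (Q * Q) *
          (mpow A⁻¹ (1/2) * mpow (Q * B * Q) (1/2) * mpow A⁻¹ (1/2)) := by rw [hQQ]; rfl
    _ = B := mul_mul_mul_mul_self_eq hPQ hQP hS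

end

end Matrix

/-- if `A ⪯ B` in the near order then `λᵢ(A) ≤ λᵢ(B)` for every `i`. -/
theorem near_order_implies_eigenvalue_entrywise {n : ℕ} (A B : Matrix (Fin n) (Fin n) ℂ)
    (hA : A.PosDef) (hB : B.PosDef) (h : NearLE A B) :
    ∀ i : Fin n, eigDesc hA.1 i ≤ eigDesc hB.1 i := by
  have hC := Matrix.isHermitian_gmean A⁻¹ B (1/2)
  refine Matrix.eigDesc_le_eigDesc_of_conjTranspose_mul_mul_eq hA.posSemidef hB.1 ?_
    (h.conjTranspose_mul_self_sub_one hC)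
  rw [hC.eq]
  exact Matrix.gmean_inv_mul_mul_gmean_inv hA hB
end
end

section
/- Let A, P, Q be n×n complex positive definite matrices with PQ = QP. Then P ≤ Q in the Loewner order if and only if PAP ⪯ QAQ in the near order. -/
open scoped ComplexOrder Matrix

noncomputable section

/-!
`X⁻¹ ♯ Y` is the unique positive definite solution `Z` of the Riccati equation `Z X Z = Y`:
conjugating by `X^{1/2}` turns two solutions into positive square roots of the same matrix.
For `X = PAP`, `Y = QAQ` with `PQ = QP`, the matrix `QP⁻¹ = P^{-1/2} Q P^{-1/2}` is such a
solution, and `QP⁻¹ - I = P^{-1/2} (Q - P) P^{-1/2}`, so `I ≤ X⁻¹ ♯ Y` iff `P ≤ Q`.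
-/

open scoped MatrixOrder

namespace Matrix

variable {m 𝕜 : Type*} [Fintype m] [DecidableEq m] [RCLike 𝕜]

theorem PosDef.mul_mul_of_isHermitian {M H : Matrix m m 𝕜} (hM : M.PosDef)
    (hH : H.IsHermitian) (hu : IsUnit H) : (H * M * H).PosDef := by
  simpa [star_eq_conjTranspose, hH.eq] using (IsUnit.posDef_star_right_conjugate_iff hu).mpr hM

theorem IsHermitian.posSemidef_mul_mul_iff {M H : Matrix m m 𝕜} (hH : H.IsHermitian)
    (hu : IsUnit H) : (H * M * H).PosSemidef ↔ M.PosSemidef := by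
  simpa [star_eq_conjTranspose, hH.eq] using IsUnit.posSemidef_star_right_conjugate_iff (x := M) hu

theorem PosSemidef.eq_of_mul_mul_eq {X Z G : Matrix m m 𝕜} (hX : X.PosDef)
    (hZ : Z.PosSemidef) (hG : G.PosSemidef) (h : Z * X * Z = G * X * G) : Z = G := by
  set T := CFC.sqrt X
  have hT : IsStrictlyPositive T := hX.isStrictlyPositive.sqrt
  have hTT : T * T = X := CFC.sqrt_mul_sqrt_self X hX.posSemidef.nonneg
  have hTsq (W : Matrix m m 𝕜) : (T * W * T) * (T * W * T) = T * (W * X * W) * T := by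
    simp only [← hTT, mul_assoc]
  have hconj (W : Matrix m m 𝕜) (hW : W.PosSemidef) : 0 ≤ T * W * T :=
    ((hT.isSelfAdjoint.isHermitian.posSemidef_mul_mul_iff hT.isUnit).mpr hW).nonneg
  have hTZT : T * Z * T = T * G * T := by
    rw [← CFC.sqrt_unique (hTsq Z) (hconj Z hZ), ← CFC.sqrt_unique (hTsq G) (hconj G hG), h]
  exact hT.isUnit.mul_left_cancel (hT.isUnit.mul_right_cancel hTZT)

end Matrix

section FinComplex

variable {n : ℕ} {A B G P Q : Matrix (Fin n) (Fin n) ℂ}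

theorem mpow_eq_rpow (hA : A.PosSemidef) (t : ℝ) : mpow A t = A ^ t :=
  (CFC.rpow_eq_cfc_real hA.nonneg).symm

theorem posDef_mpow (hA : A.PosDef) (t : ℝ) : (mpow A t).PosDef := by
  rw [mpow_eq_rpow hA.posSemidef]
  exact Matrix.IsStrictlyPositive.posDef (IsStrictlyPositive.rpow A t hA.isStrictlyPositive)

theorem mpow_add (hA : A.PosDef) (s t : ℝ) : mpow A (s + t) = mpow A s * mpow A t := by
  simp only [mpow_eq_rpow hA.posSemidef]
  exact CFC.rpow_add hA.isUnit

theorem mpow_zero (hA : A.PosDef) : mpow A 0 = 1 := by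
  rw [mpow_eq_rpow hA.posSemidef, CFC.rpow_zero A hA.posSemidef.nonneg]

theorem mpow_one (hA : A.PosDef) : mpow A 1 = A := by
  rw [mpow_eq_rpow hA.posSemidef, CFC.rpow_one A hA.posSemidef.nonneg]

theorem mpow_neg_one (hA : A.PosDef) : mpow A (-1) = A⁻¹ := by
  rw [mpow_eq_rpow hA.posSemidef, Matrix.nonsing_inv_eq_ringInverse,
    CFC.inverse_eq_rpow_neg_one hA.isStrictlyPositive]

theorem Commute.mpow_left (h : Commute P Q) (t : ℝ) : Commute (mpow P t) Q :=
  h.cfc_real _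

theorem posDef_gmean (hA : A.PosDef) (hB : B.PosDef) (t : ℝ) : (gmean A B t).PosDef := by
  have ha := posDef_mpow hA (1/2)
  have hc := posDef_mpow hA (-(1/2))
  exact (posDef_mpow (hB.mul_mul_of_isHermitian hc.isHermitian hc.isUnit) t).mul_mul_of_isHermitian
    ha.isHermitian ha.isUnit

theorem gmean_half_mul_inv_mul_gmean_half (hA : A.PosDef) (hB : B.PosDef) :
    gmean A B (1/2) * A⁻¹ * gmean A B (1/2) = B := by
  set a := mpow A (1/2)
  set c := mpow A (-(1/2))
  set W := mpow (c * B * c) (1/2)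
  have hc : c.PosDef := posDef_mpow hA _
  have hC : (c * B * c).PosDef := hB.mul_mul_of_isHermitian hc.isHermitian hc.isUnit
  have haAa : a * A⁻¹ * a = 1 := by
    rw [← mpow_neg_one hA, ← mpow_add hA, ← mpow_add hA]
    norm_num [mpow_zero hA]
  have hac : a * c = 1 := by
    rw [← mpow_add hA]
    norm_num [mpow_zero hA]
  have hca : c * a = 1 := by
    rw [← mpow_add hA]
    norm_num [mpow_zero hA]
  have hWW : W * W = c * B * c := by
    rw [← mpow_add hC]
    norm_num [mpow_one hC]
  change a * W * a * A⁻¹ * (a * W * a) = B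
  calc a * W * a * A⁻¹ * (a * W * a) = a * W * (a * A⁻¹ * a) * W * a := by
        simp only [mul_assoc]
    _ = a * (W * W) * a := by rw [haAa, mul_one, mul_assoc a W W]
    _ = (a * c) * B * (c * a) := by rw [hWW]; simp only [mul_assoc]
    _ = B := by rw [hac, hca, one_mul, mul_one]

theorem gmean_half_eq_of_mul_inv_mul (hA : A.PosDef) (hG : G.PosDef) (h : G * A⁻¹ * G = B) :
    gmean A B (1/2) = G := by
  have hB : B.PosDef := h ▸ hA.inv.mul_mul_of_isHermitian hG.isHermitian hG.isUnit
  exact (posDef_gmean hA hB _).posSemidef.eq_of_mul_mul_eq hA.inv hG.posSemidef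
    (by rw [gmean_half_mul_inv_mul_gmean_half hA hB, h])

theorem mpow_neg_half_mul_mul_mpow_neg_half (hP : P.PosDef) (hPQ : Commute P Q) :
    mpow P (-(1/2)) * Q * mpow P (-(1/2)) = Q * P⁻¹ := by
  rw [(hPQ.mpow_left _).eq, mul_assoc, ← mpow_add hP]
  norm_num [mpow_neg_one hP]

theorem posDef_mul_inv_of_commute (hP : P.PosDef) (hQ : Q.PosDef) (hPQ : Commute P Q) :
    (Q * P⁻¹).PosDef := by
  have hR := posDef_mpow hP (-(1/2))
  rw [← mpow_neg_half_mul_mul_mpow_neg_half hP hPQ]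
  exact hQ.mul_mul_of_isHermitian hR.isHermitian hR.isUnit

theorem posSemidef_mul_inv_sub_one_iff (hP : P.PosDef) (hPQ : Commute P Q) :
    (Q * P⁻¹ - 1).PosSemidef ↔ (Q - P).PosSemidef := by
  have hR := posDef_mpow hP (-(1/2))
  rw [← Matrix.mul_nonsing_inv P ((Matrix.isUnit_iff_isUnit_det P).mp hP.isUnit),
    ← mpow_neg_half_mul_mul_mpow_neg_half hP hPQ,
    ← mpow_neg_half_mul_mul_mpow_neg_half hP (Commute.refl P), ← sub_mul, ← mul_sub]
  exact hR.isHermitian.posSemidef_mul_mul_iff hR.isUnit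

end FinComplex

/-- for positive definite commuting `P, Q` and positive definite `A`,
`P ≤ Q` (Loewner) iff `PAP ⪯ QAQ` (near order). -/
theorem posdef_congruence_near_order {n : ℕ} (A P Q : Matrix (Fin n) (Fin n) ℂ)
    (hA : A.PosDef) (hP : P.PosDef) (hQ : Q.PosDef) (hPQ : P * Q = Q * P) :
    LoewnerLE P Q ↔ NearLE (P * A * P) (Q * A * Q) := by
  have hX : (P * A * P).PosDef := hA.mul_mul_of_isHermitian hP.isHermitian hP.isUnit
  have hGXG : Q * P⁻¹ * (P * A * P)⁻¹⁻¹ * (Q * P⁻¹) = Q * A * Q := by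
    have hdet := (Matrix.isUnit_iff_isUnit_det P).mp hP.isUnit
    rw [Matrix.nonsing_inv_nonsing_inv _ ((Matrix.isUnit_iff_isUnit_det _).mp hX.isUnit)]
    calc Q * P⁻¹ * (P * A * P) * (Q * P⁻¹) = Q * (P⁻¹ * P) * A * (P * Q) * P⁻¹ := by
          simp only [mul_assoc]
      _ = Q * A * Q * (P * P⁻¹) := by
          rw [hPQ, Matrix.nonsing_inv_mul _ hdet]
          simp only [mul_assoc, one_mul]
      _ = Q * A * Q := by rw [Matrix.mul_nonsing_inv _ hdet, mul_one]
  rw [NearLE, gmean_half_eq_of_mul_inv_mul hX.inv (posDef_mul_inv_of_commute hP hQ hPQ) hGXG,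
    LoewnerLE, LoewnerLE, posSemidef_mul_inv_sub_one_iff hP hPQ]
end
end

section
/- Let A, B be n×n complex positive definite matrices. Then for all s, u, t ∈ ℝ: (A ♮_s B) ♮_t (A ♮_u B) = A ♮_{(1−t)s + tu} B. -/
open scoped ComplexOrder Matrix

noncomputable section

/-!
With `M = A⁻¹ ♯ B` one has `A ♮ᵣ B = Mʳ A Mʳ`. The geometric mean `X⁻¹ ♯ Y` is the positive
solution `G` of the Riccati equation `G X G = Y`, and `Mᵘ⁻ˢ (Mˢ A Mˢ) Mᵘ⁻ˢ = Mᵘ A Mᵘ`, so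
`(A ♮ₛ B)⁻¹ ♯ (A ♮ᵤ B) = Mᵘ⁻ˢ`. Hence `(A ♮ₛ B) ♮ₜ (A ♮ᵤ B) = M⁽ᵘ⁻ˢ⁾ᵗ Mˢ A Mˢ M⁽ᵘ⁻ˢ⁾ᵗ`,
which is `A ♮_{(1-t)s+tu} B`. The exponent laws are those of `CFC.rpow`, which agrees with
`mpow` on positive semidefinite matrices.
-/

namespace CFC

variable {A : Type*} [PartialOrder A] [Ring A] [StarRing A] [TopologicalSpace A]
  [StarOrderedRing A] [Algebra ℝ A] [ContinuousFunctionalCalculus ℝ A IsSelfAdjoint]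
  [NonnegSpectrumClass ℝ A]

lemma rpow_mul_conj_mul_rpow {m : A} (hm : IsUnit m) (a : A) (x y : ℝ) :
    m ^ x * (m ^ y * a * m ^ y) * m ^ x = m ^ (x + y) * a * m ^ (x + y) :=
  calc m ^ x * (m ^ y * a * m ^ y) * m ^ x = (m ^ x * m ^ y) * a * (m ^ y * m ^ x) := by
        noncomm_ring
    _ = m ^ (x + y) * a * m ^ (x + y) := by rw [← rpow_add hm, ← rpow_add hm, add_comm y x]

lemma isStrictlyPositive_rpow_mul_mul_rpow {m a : A} (hm : IsStrictlyPositive m)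
    (ha : IsStrictlyPositive a) (x : ℝ) : IsStrictlyPositive (m ^ x * a * m ^ x) :=
  have hmx := IsStrictlyPositive.rpow m x hm
  IsStrictlyPositive.conjugate_of_isUnit_of_isSelfAdjoint a _ hmx.isUnit hmx.isSelfAdjoint ha

variable [IsSemitopologicalRing A] [T2Space A]

lemma rpow_rpow_of_isStrictlyPositive {a : A} (ha : IsStrictlyPositive a) (x y : ℝ) :
    (a ^ x) ^ y = a ^ (x * y) := by
  rcases eq_or_ne x 0 with rfl | hx
  · rw [rpow_zero a ha.nonneg, zero_mul, rpow_zero a ha.nonneg, one_rpow]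
  · exact rpow_rpow a x y hx ha

lemma ringInverse_rpow {a : A} (ha : IsStrictlyPositive a) (x : ℝ) :
    Ring.inverse a ^ x = a ^ (-x) := by
  rw [inverse_eq_rpow_neg_one ha, rpow_rpow_of_isStrictlyPositive ha, neg_one_mul]

lemma rpow_half_mul_conj_mul_rpow_half {a : A} (ha : 0 ≤ a) (g : A) :
    a ^ (1/2 : ℝ) * (g * a * g) * a ^ (1/2 : ℝ) =
      (a ^ (1/2 : ℝ) * g * a ^ (1/2 : ℝ)) * (a ^ (1/2 : ℝ) * g * a ^ (1/2 : ℝ)) := by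
  have hp : a ^ (1/2 : ℝ) * a ^ (1/2 : ℝ) = a := by rw [← sqrt_eq_rpow, sqrt_mul_sqrt_self a ha]
  set p := a ^ (1/2 : ℝ)
  rw [← hp]
  noncomm_ring

end CFC

open scoped MatrixOrder

section Matrix

variable {n : ℕ}

lemma mpow_eq_rpow_s4 {X : Matrix (Fin n) (Fin n) ℂ} (hX : 0 ≤ X) (t : ℝ) : mpow X t = X ^ t :=
  (CFC.rpow_eq_cfc_real hX).symm

lemma isStrictlyPositive_inv {X : Matrix (Fin n) (Fin n) ℂ} (hX : IsStrictlyPositive X) :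
    IsStrictlyPositive X⁻¹ :=
  Matrix.nonsing_inv_eq_ringInverse X ▸ hX.ringInverse

lemma isStrictlyPositive_gmean {X Y : Matrix (Fin n) (Fin n) ℂ} (hX : IsStrictlyPositive X)
    (hY : IsStrictlyPositive Y) (t : ℝ) : IsStrictlyPositive (gmean X Y t) := by
  have hC := CFC.isStrictlyPositive_rpow_mul_mul_rpow hX hY (-(1/2))
  rw [gmean, mpow_eq_rpow_s4 hX.nonneg, mpow_eq_rpow_s4 hX.nonneg, mpow_eq_rpow_s4 hC.nonneg]
  exact CFC.isStrictlyPositive_rpow_mul_mul_rpow hX (IsStrictlyPositive.rpow _ t hC) _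

theorem gmean_inv_mul_mul_self {X G : Matrix (Fin n) (Fin n) ℂ} (hX : IsStrictlyPositive X)
    (hG : 0 ≤ G) : gmean X⁻¹ (G * X * G) (1/2) = G := by
  have hX' : 0 ≤ X⁻¹ := (isStrictlyPositive_inv hX).nonneg
  have hc : 0 ≤ X ^ (1/2 : ℝ) * G * X ^ (1/2 : ℝ) :=
    (IsStrictlyPositive.rpow X _ hX).isSelfAdjoint.conjugate_nonneg hG
  rw [gmean, mpow_eq_rpow_s4 hX', mpow_eq_rpow_s4 hX', Matrix.nonsing_inv_eq_ringInverse,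
    CFC.ringInverse_rpow hX, CFC.ringInverse_rpow hX, neg_neg,
    CFC.rpow_half_mul_conj_mul_rpow_half hX.nonneg,
    mpow_eq_rpow_s4 hc.isSelfAdjoint.mul_self_nonneg, ← CFC.sqrt_eq_rpow, CFC.sqrt_mul_self _ hc]
  calc X ^ (-(1/2) : ℝ) * (X ^ (1/2 : ℝ) * G * X ^ (1/2 : ℝ)) * X ^ (-(1/2) : ℝ)
      = (X ^ (-(1/2) : ℝ) * X ^ (1/2 : ℝ)) * G * (X ^ (1/2 : ℝ) * X ^ (-(1/2) : ℝ)) := by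
        noncomm_ring
    _ = G := by rw [CFC.rpow_neg_mul_rpow _ hX, CFC.rpow_mul_rpow_neg _ hX, one_mul, mul_one]

lemma smean_eq_rpow {X Y : Matrix (Fin n) (Fin n) ℂ} (hX : IsStrictlyPositive X)
    (hY : IsStrictlyPositive Y) (t : ℝ) :
    smean X Y t = gmean X⁻¹ Y (1/2) ^ t * X * gmean X⁻¹ Y (1/2) ^ t := by
  rw [smean, mpow_eq_rpow_s4 (isStrictlyPositive_gmean (isStrictlyPositive_inv hX) hY _).nonneg]

end Matrix

/-- `(A ♮ₛ B) ♮ₜ (A ♮ᵤ B) = A ♮_{(1−t)s+tu} B` for all real `s, u, t`. -/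
theorem smean_geodesic_property {n : ℕ} (A B : Matrix (Fin n) (Fin n) ℂ)
    (hA : A.PosDef) (hB : B.PosDef) (s u t : ℝ) :
    smean (smean A B s) (smean A B u) t = smean A B ((1 - t) * s + t * u) := by
  have hA' := hA.isStrictlyPositive
  have hB' := hB.isStrictlyPositive
  set M := gmean A⁻¹ B (1/2)
  have hM : IsStrictlyPositive M := isStrictlyPositive_gmean (isStrictlyPositive_inv hA') hB' _
  have hsmean (r : ℝ) : smean A B r = M ^ r * A * M ^ r := smean_eq_rpow hA' hB' r
  have hS : IsStrictlyPositive (smean A B s) := by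
    rw [hsmean]; exact CFC.isStrictlyPositive_rpow_mul_mul_rpow hM hA' s
  have hMus : IsStrictlyPositive (M ^ (u - s)) := IsStrictlyPositive.rpow M _ hM
  have hSu : smean A B u = M ^ (u - s) * smean A B s * M ^ (u - s) := by
    rw [hsmean, hsmean, CFC.rpow_mul_conj_mul_rpow hM.isUnit, sub_add_cancel]
  have hG : gmean (smean A B s)⁻¹ (smean A B u) (1/2) = M ^ (u - s) := by
    rw [hSu]; exact gmean_inv_mul_mul_self hS hMus.nonneg
  rw [smean, hG, mpow_eq_rpow_s4 hMus.nonneg, CFC.rpow_rpow_of_isStrictlyPositive hM, hsmean,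
    CFC.rpow_mul_conj_mul_rpow hM.isUnit, hsmean, show (u - s) * t + s = (1 - t) * s + t * u by ring]
end
end

section
/- Let A, B be n×n complex positive definite matrices. For every t ∈ (0, 1), the spectral geometric mean and the arithmetic mean satisfy A ♮_t B ⪯ A ∇_t B in the near order. -/
open scoped ComplexOrder Matrix

noncomputable section

/-! With `C = A⁻¹ ♯ B`, which solves the Riccati equation `C A C = B`, the spectral mean is
`X = Cᵗ A Cᵗ`. The matrix `W = (1 - t) C⁻ᵗ + t C¹⁻ᵗ` is a function of `C`, satisfies `W ≥ I` by the
weighted AM–GM inequality on the spectrum, and `W Cᵗ = D := (1 - t) I + t C`; hence `W X W = D A D`.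
Convexity of `Z ↦ Z* A Z` gives `D A D ≤ (1 - t) A + t C A C = A ∇ₜ B`. Finally `X⁻¹ ♯ (W X W) = W`
and `X⁻¹ ♯ ·` is monotone (operator monotonicity of the square root), so
`I ≤ W ≤ X⁻¹ ♯ (A ∇ₜ B)`. -/

open scoped Matrix.Norms.L2Operator MatrixOrder

section Convexity

variable {R : Type*} [Ring R] [PartialOrder R] [StarRing R] [StarOrderedRing R] [Algebra ℝ R]
  [StarModule ℝ R] [PosSMulMono ℝ R]

lemma convexOn_star_mul_mul {a : R} (ha : 0 ≤ a) :
    ConvexOn ℝ Set.univ (fun z : R => star z * a * z) := by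
  refine ⟨convex_univ, fun x _ y _ s t hs ht hst => ?_⟩
  obtain rfl : s = 1 - t := by linarith
  have key : (1 - t) • (star x * a * x) + t • (star y * a * y) -
      star ((1 - t) • x + t • y) * a * ((1 - t) • x + t • y) =
        (t * (1 - t)) • (star (x - y) * a * (x - y)) := by
    simp only [star_add, star_sub, star_smul, star_trivial, add_mul, mul_add, sub_mul, mul_sub,
      smul_mul_assoc, mul_smul_comm]
    module
  rw [← sub_nonneg, key]
  exact smul_nonneg (mul_nonneg ht hs) (star_left_conjugate_nonneg ha _)

end Convexity

section GeometricMean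

variable {n : ℕ} {P Q R W : Matrix (Fin n) (Fin n) ℂ}

lemma mpow_eq_rpow_s9 (hP : 0 ≤ P) (t : ℝ) : mpow P t = P ^ t :=
  (CFC.rpow_eq_cfc_real hP).symm

lemma gmean_eq_rpow (hP : 0 ≤ P) (hQ : 0 ≤ Q) (t : ℝ) :
    gmean P Q t =
      P ^ (1 / 2 : ℝ) * (P ^ (-(1 / 2) : ℝ) * Q * P ^ (-(1 / 2) : ℝ)) ^ t * P ^ (1 / 2 : ℝ) := by
  have hM : 0 ≤ P ^ (-(1 / 2) : ℝ) * Q * P ^ (-(1 / 2) : ℝ) :=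
    conjugate_nonneg_of_nonneg hQ CFC.rpow_nonneg
  simp only [gmean, mpow_eq_rpow_s9 hP, mpow_eq_rpow_s9 hM]

lemma gmean_nonneg (hP : 0 ≤ P) (hQ : 0 ≤ Q) (t : ℝ) : 0 ≤ gmean P Q t := by
  rw [gmean_eq_rpow hP hQ]
  exact conjugate_nonneg_of_nonneg CFC.rpow_nonneg CFC.rpow_nonneg

lemma IsStrictlyPositive.gmean (hP : IsStrictlyPositive P) (hQ : IsStrictlyPositive Q) (t : ℝ) :
    IsStrictlyPositive (gmean P Q t) := by
  have hS (s : ℝ) : IsUnit (P ^ s) := (hP.rpow _ _).isUnit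
  rw [gmean_eq_rpow hP.nonneg hQ.nonneg]
  have hM : IsStrictlyPositive (P ^ (-(1 / 2) : ℝ) * Q * P ^ (-(1 / 2) : ℝ)) :=
    .conjugate_of_isUnit_of_isSelfAdjoint Q _ (hS _) CFC.rpow_nonneg.isSelfAdjoint hQ
  exact .conjugate_of_isUnit_of_isSelfAdjoint _ _ (hS _) CFC.rpow_nonneg.isSelfAdjoint (hM.rpow _ t)

lemma gmean_mono_right (hP : 0 ≤ P) (hQ : 0 ≤ Q) (hQR : Q ≤ R) {t : ℝ}
    (ht : t ∈ Set.Icc 0 1) : gmean P Q t ≤ gmean P R t := by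
  rw [gmean_eq_rpow hP hQ, gmean_eq_rpow hP (hQ.trans hQR)]
  refine conjugate_le_conjugate_of_nonneg (CFC.rpow_le_rpow ht ?_) CFC.rpow_nonneg
  exact conjugate_le_conjugate_of_nonneg hQR CFC.rpow_nonneg

lemma IsStrictlyPositive.matrix_inv (hP : IsStrictlyPositive P) : IsStrictlyPositive P⁻¹ := by
  rw [Matrix.nonsing_inv_eq_ringInverse]
  exact hP.ringInverse

lemma IsStrictlyPositive.matrix_inv_inv (hP : IsStrictlyPositive P) : P⁻¹⁻¹ = P :=
  Matrix.nonsing_inv_nonsing_inv _ ((Matrix.isUnit_iff_isUnit_det _).mp hP.isUnit)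

lemma inv_eq_rpow_neg_one_half_mul_self (hP : IsStrictlyPositive P) :
    P⁻¹ = P ^ (-(1 / 2) : ℝ) * P ^ (-(1 / 2) : ℝ) :=
  calc P⁻¹ = Ring.inverse (P ^ (1 : ℝ)) := by rw [CFC.rpow_one P, Matrix.nonsing_inv_eq_ringInverse]
    _ = P ^ (-1 : ℝ) := CFC.inverse_rpow P 1 one_ne_zero
    _ = P ^ (-(1 / 2) : ℝ) * P ^ (-(1 / 2) : ℝ) := by rw [← CFC.rpow_add hP.isUnit]; norm_num

lemma rpow_one_half_mul_inv_mul_rpow_one_half (hP : IsStrictlyPositive P) :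
    P ^ (1 / 2 : ℝ) * P⁻¹ * P ^ (1 / 2 : ℝ) = 1 := by
  rw [inv_eq_rpow_neg_one_half_mul_self hP, ← mul_assoc, CFC.rpow_mul_rpow_neg, one_mul,
    CFC.rpow_neg_mul_rpow]

lemma gmean_mul_inv_mul_gmean (hP : IsStrictlyPositive P) (hQ : 0 ≤ Q) :
    gmean P Q (1 / 2) * P⁻¹ * gmean P Q (1 / 2) = Q := by
  rw [gmean_eq_rpow hP.nonneg hQ]
  set M := P ^ (-(1 / 2) : ℝ) * Q * P ^ (-(1 / 2) : ℝ) with hM_def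
  have hM : M ^ (1 / 2 : ℝ) * M ^ (1 / 2 : ℝ) = M := by
    rw [← CFC.sqrt_eq_rpow, CFC.sqrt_mul_sqrt_self M (conjugate_nonneg_of_nonneg hQ CFC.rpow_nonneg)]
  have hS := rpow_one_half_mul_inv_mul_rpow_one_half hP
  calc P ^ (1 / 2 : ℝ) * M ^ (1 / 2 : ℝ) * P ^ (1 / 2 : ℝ) * P⁻¹ *
        (P ^ (1 / 2 : ℝ) * M ^ (1 / 2 : ℝ) * P ^ (1 / 2 : ℝ))
      = P ^ (1 / 2 : ℝ) * (M ^ (1 / 2 : ℝ) * (P ^ (1 / 2 : ℝ) * P⁻¹ * P ^ (1 / 2 : ℝ)) *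
          M ^ (1 / 2 : ℝ)) * P ^ (1 / 2 : ℝ) := by simp only [mul_assoc]
    _ = (P ^ (1 / 2 : ℝ) * P ^ (-(1 / 2) : ℝ)) * Q * (P ^ (-(1 / 2) : ℝ) * P ^ (1 / 2 : ℝ)) := by
        rw [hS, mul_one, hM, hM_def]; simp only [mul_assoc]
    _ = Q := by rw [CFC.rpow_mul_rpow_neg, CFC.rpow_neg_mul_rpow, one_mul, mul_one]

lemma gmean_mul_inv_mul_self (hP : IsStrictlyPositive P) (hW : 0 ≤ W) :
    gmean P (W * P⁻¹ * W) (1 / 2) = W := by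
  set Z := P ^ (-(1 / 2) : ℝ) * W * P ^ (-(1 / 2) : ℝ)
  have hZ : 0 ≤ Z := conjugate_nonneg_of_nonneg hW CFC.rpow_nonneg
  have hWPW : 0 ≤ W * P⁻¹ * W :=
    hW.isSelfAdjoint.conjugate_nonneg hP.matrix_inv.nonneg
  calc gmean P (W * P⁻¹ * W) (1 / 2)
      = P ^ (1 / 2 : ℝ) * CFC.sqrt (Z * Z) * P ^ (1 / 2 : ℝ) := by
        rw [gmean_eq_rpow hP.nonneg hWPW, CFC.sqrt_eq_rpow, inv_eq_rpow_neg_one_half_mul_self hP]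
        simp only [Z, mul_assoc]
    _ = (P ^ (1 / 2 : ℝ) * P ^ (-(1 / 2) : ℝ)) * W * (P ^ (-(1 / 2) : ℝ) * P ^ (1 / 2 : ℝ)) := by
        rw [CFC.sqrt_mul_self Z hZ]; simp only [Z, mul_assoc]
    _ = W := by rw [CFC.rpow_mul_rpow_neg, CFC.rpow_neg_mul_rpow, one_mul, mul_one]

end GeometricMean

section SpectralMean

variable {n : ℕ} {A B W X Y : Matrix (Fin n) (Fin n) ℂ}

lemma smean_eq_rpow_s9 (hA : IsStrictlyPositive A) (hB : 0 ≤ B) (t : ℝ) :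
    smean A B t = gmean A⁻¹ B (1 / 2) ^ t * A * gmean A⁻¹ B (1 / 2) ^ t := by
  rw [smean, mpow_eq_rpow_s9 (gmean_nonneg hA.matrix_inv.nonneg hB _)]

lemma IsStrictlyPositive.smean (hA : IsStrictlyPositive A) (hB : IsStrictlyPositive B) (t : ℝ) :
    IsStrictlyPositive (smean A B t) := by
  rw [smean_eq_rpow_s9 hA hB.nonneg]
  exact .conjugate_of_isUnit_of_isSelfAdjoint A _ ((hA.matrix_inv.gmean hB _).rpow _ _).isUnit
    CFC.rpow_nonneg.isSelfAdjoint hA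

lemma nearLE_of_mul_mul_le (hX : IsStrictlyPositive X) (hW : 1 ≤ W) (h : W * X * W ≤ Y) :
    NearLE X Y := by
  have hW₀ : 0 ≤ W := zero_le_one.trans hW
  refine Matrix.le_iff.mp <| calc
    1 ≤ W := hW
    _ = gmean X⁻¹ (W * X * W) (1 / 2) := by
      simpa only [hX.matrix_inv_inv] using (gmean_mul_inv_mul_self hX.matrix_inv hW₀).symm
    _ ≤ gmean X⁻¹ Y (1 / 2) :=
      gmean_mono_right hX.matrix_inv.nonneg (hW₀.isSelfAdjoint.conjugate_nonneg hX.nonneg) h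
        ⟨by norm_num, by norm_num⟩

end SpectralMean

def weightedRpowSum (t x : ℝ) : ℝ := (1 - t) * x ^ (-t) + t * x ^ (1 - t)

lemma one_le_weightedRpowSum {t x : ℝ} (ht₀ : 0 ≤ t) (ht₁ : t ≤ 1) (hx : 0 < x) :
    1 ≤ weightedRpowSum t x := by
  have hgeom : (x ^ (-t)) ^ (1 - t) * (x ^ (1 - t)) ^ t = 1 := by
    rw [← Real.rpow_mul hx.le, ← Real.rpow_mul hx.le, ← Real.rpow_add hx]
    ring_nf
    exact Real.rpow_zero x
  calc 1 = (x ^ (-t)) ^ (1 - t) * (x ^ (1 - t)) ^ t := hgeom.symm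
    _ ≤ weightedRpowSum t x :=
      Real.geom_mean_le_arith_mean2_weighted (by linarith) ht₀ (by positivity) (by positivity)
        (by ring)

lemma weightedRpowSum_mul_rpow (t : ℝ) {x : ℝ} (hx : 0 < x) :
    weightedRpowSum t x * x ^ t = 1 - t + t * x := by
  rw [weightedRpowSum, add_mul, mul_assoc, mul_assoc, ← Real.rpow_add hx, ← Real.rpow_add hx]
  norm_num

section SpectralCalculus

variable {n : ℕ} {C : Matrix (Fin n) (Fin n) ℂ}

lemma one_le_cfc_weightedRpowSum (hC : IsStrictlyPositive C) {t : ℝ} (ht₀ : 0 ≤ t) (ht₁ : t ≤ 1) :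
    1 ≤ cfc (weightedRpowSum t) C := by
  simpa using algebraMap_le_cfc _ (1 : ℝ) C
    (fun x hx => one_le_weightedRpowSum ht₀ ht₁ (hC.spectrum_pos hx))
    (C.finite_real_spectrum.continuousOn _)

lemma cfc_weightedRpowSum_mul_rpow (hC : IsStrictlyPositive C) (t : ℝ) :
    cfc (weightedRpowSum t) C * C ^ t = (1 - t) • 1 + t • C := by
  have hcont (f : ℝ → ℝ) : ContinuousOn f (spectrum ℝ C) := C.finite_real_spectrum.continuousOn f
  rw [CFC.rpow_eq_cfc_real hC.nonneg, ← cfc_mul _ _ C (hcont _) (hcont _),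
    cfc_congr fun x hx => weightedRpowSum_mul_rpow t (hC.spectrum_pos hx),
    cfc_const_add _ _ C (hcont _), cfc_const_mul_id t C, Algebra.algebraMap_eq_smul_one]

lemma commute_rpow_cfc (hC : 0 ≤ C) (t : ℝ) (f : ℝ → ℝ) : Commute (C ^ t) (cfc f C) := by
  rw [CFC.rpow_eq_cfc_real hC]
  exact cfc_commute_cfc _ _ C

end SpectralCalculus

/-- `A ♮ₜ B ⪯ A ∇ₜ B` in the near order for all `t ∈ (0,1)`. -/
theorem smean_near_le_amean {n : ℕ} (A B : Matrix (Fin n) (Fin n) ℂ)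
    (hA : A.PosDef) (hB : B.PosDef) :
    ∀ t : ℝ, 0 < t → t < 1 → NearLE (smean A B t) (amean A B t) := by
  intro t ht₀ ht₁
  rw [← Matrix.isStrictlyPositive_iff_posDef] at hA hB
  set C := gmean A⁻¹ B (1 / 2) with hC_def
  have hC : IsStrictlyPositive C := hA.matrix_inv.gmean hB _
  have hCAC : C * A * C = B := by
    simpa only [hA.matrix_inv_inv] using gmean_mul_inv_mul_gmean hA.matrix_inv hB.nonneg
  set W := cfc (weightedRpowSum t) C
  refine nearLE_of_mul_mul_le (hA.smean hB t) (one_le_cfc_weightedRpowSum hC ht₀.le ht₁.le) ?_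
  calc W * smean A B t * W = (W * C ^ t) * A * (C ^ t * W) := by
        rw [smean_eq_rpow_s9 hA hB.nonneg, ← hC_def]; simp only [mul_assoc]
    _ = star ((1 - t) • 1 + t • C) * A * ((1 - t) • 1 + t • C) := by
        rw [(commute_rpow_cfc hC.nonneg t _).eq, cfc_weightedRpowSum_mul_rpow hC, star_add, star_smul, star_smul, star_one,
          hC.isSelfAdjoint.star_eq, star_trivial, star_trivial]
    _ ≤ (1 - t) • (star 1 * A * 1) + t • (star C * A * C) :=
        (convexOn_star_mul_mul hA.nonneg).2 trivial trivial (by linarith) ht₀.le (by ring)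
    _ = amean A B t := by
        rw [star_one, one_mul, mul_one, hC.isSelfAdjoint.star_eq, hCAC, amean, Complex.coe_smul,
          Complex.coe_smul]
end
end

section
/- Let A, B be distinct n×n complex positive definite matrices, and let μ_1 ≥ … ≥ μ_n be the eigenvalues of A^{-1} ♯ B. Then for all real numbers t < s: μ_n^{2s−2t} · (A ♮_t B) ⪯ A ♮_s B and A ♮_s B ⪯ μ_1^{2s−2t} · (A ♮_t B), where ⪯ is the near order. -/
open scoped ComplexOrder Matrix

noncomputable section

/-!
With `C = A⁻¹ ♯ B` one has `A ♮ᵣ B = Cʳ A Cʳ`. For positive `X` and `G`, `G` is the unique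
positive solution of the Riccati equation `G X G = Y`, so `X⁻¹ ♯ (G X G) = G` and hence
`X ⪯ G X G` as soon as `1 ≤ G`. Taking `G = μₙ^{t-s} C^{s-t}` conjugates `μₙ^{2s-2t} Cᵗ A Cᵗ`
into `Cˢ A Cˢ`, and `1 ≤ G` because the spectrum of `C` lies above `μₙ`; the upper bound uses
`G = μ₁^{s-t} C^{t-s}` in the same way. On positive matrices `mpow` agrees with `CFC.rpow`.
-/

open scoped MatrixOrder

namespace Matrix

variable {n : ℕ} {A C X G : Matrix (Fin n) (Fin n) ℂ}

lemma mpow_eq_rpow (hA : 0 ≤ A) (t : ℝ) : mpow A t = A ^ t :=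
  (CFC.rpow_eq_cfc_real hA).symm

lemma isStrictlyPositive_inv (hX : IsStrictlyPositive X) : IsStrictlyPositive X⁻¹ := by
  rw [nonsing_inv_eq_ringInverse]
  exact hX.ringInverse

lemma inv_rpow (hX : IsStrictlyPositive X) (t : ℝ) : X⁻¹ ^ t = X ^ (-t) := by
  rw [nonsing_inv_eq_ringInverse, CFC.inverse_eq_rpow_neg_one, CFC.rpow_rpow X _ _ (by norm_num),
    neg_one_mul]

lemma isStrictlyPositive_conj (hA : IsStrictlyPositive A) (hG : IsStrictlyPositive G) :
    IsStrictlyPositive (G * A * G) :=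
  IsStrictlyPositive.conjugate_of_isUnit_of_isSelfAdjoint A G hG.isUnit hG.isSelfAdjoint hA

lemma isStrictlyPositive_gmean {B : Matrix (Fin n) (Fin n) ℂ} (hA : IsStrictlyPositive A)
    (hB : IsStrictlyPositive B) (t : ℝ) : IsStrictlyPositive (gmean A B t) := by
  have hinner := isStrictlyPositive_conj hB (.rpow A (-(1/2)) hA)
  rw [gmean, mpow_eq_rpow hA.nonneg, mpow_eq_rpow hA.nonneg, mpow_eq_rpow hinner.nonneg]
  exact isStrictlyPositive_conj (.rpow _ t hinner) (.rpow A _ hA)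

lemma gmean_inv_conj_eq (hX : IsStrictlyPositive X) (hG : IsStrictlyPositive G) :
    gmean X⁻¹ (G * X * G) (1/2) = G := by
  have hXinv := isStrictlyPositive_inv hX
  set S := X ^ (1/2 : ℝ) * G * X ^ (1/2 : ℝ)
  have hS : IsStrictlyPositive S := isStrictlyPositive_conj hG (.rpow X _ hX)
  have hsq : X ^ (1/2 : ℝ) * X ^ (1/2 : ℝ) = X := by
    rw [← CFC.rpow_add hX.isUnit, add_halves, CFC.rpow_one X]
  have hinner : X ^ (1/2 : ℝ) * (G * X * G) * X ^ (1/2 : ℝ) = S * S := by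
    simp only [S, mul_assoc]
    rw [← mul_assoc (X ^ (1/2 : ℝ)) (X ^ (1/2 : ℝ)), hsq]
  rw [gmean, mpow_eq_rpow hXinv.nonneg, mpow_eq_rpow hXinv.nonneg, inv_rpow hX, inv_rpow hX,
    neg_neg, hinner, mpow_eq_rpow hS.isSelfAdjoint.mul_self_nonneg, ← CFC.sqrt_eq_rpow,
    CFC.sqrt_mul_self S]
  simp only [S, ← mul_assoc, CFC.rpow_neg_mul_rpow _ hX, one_mul]
  rw [mul_assoc, CFC.rpow_mul_rpow_neg _ hX, mul_one]

lemma nearLE_conj_of_one_le (hX : IsStrictlyPositive X) (hG : IsStrictlyPositive G)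
    (h1G : 1 ≤ G) : NearLE X (G * X * G) := by
  rw [NearLE, gmean_inv_conj_eq hX hG]
  exact h1G

lemma one_le_smul_rpow (hC : 0 ≤ C) {c r : ℝ} (h : ∀ x ∈ spectrum ℝ C, 1 ≤ c * x ^ r) :
    1 ≤ c • C ^ r := by
  rw [CFC.rpow_eq_cfc_real hC, ← cfc_const_mul c _ C (C.finite_real_spectrum.continuousOn _)]
  exact one_le_cfc _ _ h (C.finite_real_spectrum.continuousOn _)

lemma smul_rpow_conj_smul_rpow_conj (hC : IsUnit C) (c d a b : ℝ) :
    (c • C ^ a) * (d • (C ^ b * A * C ^ b)) * (c • C ^ a) =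
      (c * d * c) • (C ^ (a + b) * A * C ^ (a + b)) := by
  nth_rw 2 [add_comm]
  rw [CFC.rpow_add hC, CFC.rpow_add hC]
  simp only [smul_mul_assoc, mul_smul_comm, smul_smul, mul_assoc]

lemma IsHermitian.iInf_eigenvalues_le (hC : C.IsHermitian) {x : ℝ} (hx : x ∈ spectrum ℝ C) :
    ⨅ i, hC.eigenvalues i ≤ x := by
  obtain ⟨i, rfl⟩ := hC.spectrum_real_eq_range_eigenvalues ▸ hx
  exact ciInf_le (Finite.bddBelow_range _) i

lemma IsHermitian.le_iSup_eigenvalues (hC : C.IsHermitian) {x : ℝ} (hx : x ∈ spectrum ℝ C) :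
    x ≤ ⨆ i, hC.eigenvalues i := by
  obtain ⟨i, rfl⟩ := hC.spectrum_real_eq_range_eigenvalues ▸ hx
  exact le_ciSup (Finite.bddAbove_range _) i

lemma IsHermitian.iInf_eigenvalues_pos (hC : C.IsHermitian) [Nonempty (Fin n)]
    (hCpos : IsStrictlyPositive C) : 0 < ⨅ i, hC.eigenvalues i := by
  obtain ⟨i, hi⟩ := exists_eq_ciInf_of_finite (f := hC.eigenvalues)
  exact hi ▸ hCpos.spectrum_pos (hC.eigenvalues_mem_spectrum_real i)

lemma _root_.Real.one_le_rpow_sub_mul_rpow_sub {a b t s : ℝ} (ha : 0 < a) (hab : a ≤ b)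
    (hts : t ≤ s) : 1 ≤ a ^ (t - s) * b ^ (s - t) := by
  rw [show t - s = -(s - t) by ring, Real.rpow_neg ha.le, inv_mul_eq_div,
    one_le_div (Real.rpow_pos_of_pos ha _)]
  exact Real.rpow_le_rpow ha.le hab (sub_nonneg.2 hts)

lemma nearLE_rpow_conj_of_le_spectrum (hC : IsStrictlyPositive C) (hA : IsStrictlyPositive A)
    {t s m : ℝ} (hts : t ≤ s) (hm : 0 < m) (hmC : ∀ x ∈ spectrum ℝ C, m ≤ x) :
    NearLE (m ^ (2 * s - 2 * t) • (C ^ t * A * C ^ t)) (C ^ s * A * C ^ s) := by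
  have hG : IsStrictlyPositive (m ^ (t - s) • C ^ (s - t)) :=
    (IsStrictlyPositive.rpow C _ hC).smul (Real.rpow_pos_of_pos hm _)
  have hX : IsStrictlyPositive (m ^ (2 * s - 2 * t) • (C ^ t * A * C ^ t)) :=
    (isStrictlyPositive_conj hA (.rpow C t hC)).smul (Real.rpow_pos_of_pos hm _)
  have h1G : 1 ≤ m ^ (t - s) • C ^ (s - t) := one_le_smul_rpow hC.nonneg fun x hx =>
    Real.one_le_rpow_sub_mul_rpow_sub hm (hmC x hx) hts
  have hGXG : m ^ (t - s) • C ^ (s - t) * (m ^ (2 * s - 2 * t) • (C ^ t * A * C ^ t)) *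
      m ^ (t - s) • C ^ (s - t) = C ^ s * A * C ^ s := by
    rw [smul_rpow_conj_smul_rpow_conj hC.isUnit, ← Real.rpow_add hm, ← Real.rpow_add hm,
      show t - s + (2 * s - 2 * t) + (t - s) = 0 by ring, Real.rpow_zero, one_smul, sub_add_cancel]
  exact hGXG ▸ nearLE_conj_of_one_le hX hG h1G

lemma nearLE_rpow_conj_of_spectrum_le (hC : IsStrictlyPositive C) (hA : IsStrictlyPositive A)
    {t s M : ℝ} (hts : t ≤ s) (hM : 0 < M) (hCM : ∀ x ∈ spectrum ℝ C, x ≤ M) :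
    NearLE (C ^ s * A * C ^ s) (M ^ (2 * s - 2 * t) • (C ^ t * A * C ^ t)) := by
  have hG : IsStrictlyPositive (M ^ (s - t) • C ^ (t - s)) :=
    (IsStrictlyPositive.rpow C _ hC).smul (Real.rpow_pos_of_pos hM _)
  have hX : IsStrictlyPositive (C ^ s * A * C ^ s) := isStrictlyPositive_conj hA (.rpow C s hC)
  have h1G : 1 ≤ M ^ (s - t) • C ^ (t - s) := one_le_smul_rpow hC.nonneg fun x hx => by
    rw [mul_comm]
    exact Real.one_le_rpow_sub_mul_rpow_sub (hC.spectrum_pos hx) (hCM x hx) hts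
  have hGXG : M ^ (s - t) • C ^ (t - s) * (C ^ s * A * C ^ s) * M ^ (s - t) • C ^ (t - s) =
      M ^ (2 * s - 2 * t) • (C ^ t * A * C ^ t) := by
    rw [← one_smul ℝ (C ^ s * A * C ^ s), smul_rpow_conj_smul_rpow_conj hC.isUnit,
      mul_one, ← Real.rpow_add hM, show s - t + (s - t) = 2 * s - 2 * t by ring, sub_add_cancel]
  exact hGXG ▸ nearLE_conj_of_one_le hX hG h1G

end Matrix

theorem smean_near_order_range_general {n : ℕ} (A B : Matrix (Fin n) (Fin n) ℂ)
    (hA : A.PosDef) (hB : B.PosDef)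
    (h : (gmean A⁻¹ B (1/2)).IsHermitian) (t s : ℝ) (hts : t < s) :
    NearLE ((((⨅ i, h.eigenvalues i) ^ (2 * s - 2 * t) : ℝ) : ℂ) • smean A B t)
        (smean A B s) ∧
    NearLE (smean A B s)
        ((((⨆ i, h.eigenvalues i) ^ (2 * s - 2 * t) : ℝ) : ℂ) • smean A B t) := by
  rcases isEmpty_or_nonempty (Fin n) with hn | hn
  · have nearLE_of_isEmpty (X Y : Matrix (Fin n) (Fin n) ℂ) : NearLE X Y := by
      rw [NearLE, LoewnerLE, Subsingleton.elim (_ - 1) 0]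
      exact .zero
    exact ⟨nearLE_of_isEmpty _ _, nearLE_of_isEmpty _ _⟩
  have hC : IsStrictlyPositive (gmean A⁻¹ B (1/2)) :=
    Matrix.isStrictlyPositive_gmean (Matrix.isStrictlyPositive_inv hA.isStrictlyPositive)
      hB.isStrictlyPositive _
  have hμn : 0 < ⨅ i, h.eigenvalues i := h.iInf_eigenvalues_pos hC
  have hμ1 : 0 < ⨆ i, h.eigenvalues i :=
    hμn.trans_le (ciInf_le_ciSup (Finite.bddBelow_range _) (Finite.bddAbove_range _))
  simp only [smean, Matrix.mpow_eq_rpow hC.nonneg, Complex.coe_smul]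
  exact ⟨Matrix.nearLE_rpow_conj_of_le_spectrum hC hA.isStrictlyPositive hts.le hμn
      fun _ hx => h.iInf_eigenvalues_le hx,
    Matrix.nearLE_rpow_conj_of_spectrum_le hC hA.isStrictlyPositive hts.le hμ1
      fun _ hx => h.le_iSup_eigenvalues hx⟩

/-- for distinct `A, B` with `μ₁ ≥ ⋯ ≥ μₙ` the eigenvalues of `A⁻¹ ♯ B`
(so `μₙ = ⨅ i, μ i` and `μ₁ = ⨆ i, μ i`), for all `t < s`:
`μₙ^{2s−2t} (A ♮ₜ B) ⪯ A ♮ₛ B ⪯ μ₁^{2s−2t} (A ♮ₜ B)`. -/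
theorem smean_near_order_range {n : ℕ} (A B : Matrix (Fin n) (Fin n) ℂ)
    (hA : A.PosDef) (hB : B.PosDef) (hAB : A ≠ B)
    (h : (gmean A⁻¹ B (1/2)).IsHermitian) (t s : ℝ) (hts : t < s) :
    NearLE ((((⨅ i, h.eigenvalues i) ^ (2 * s - 2 * t) : ℝ) : ℂ) • smean A B t)
        (smean A B s) ∧
    NearLE (smean A B s)
        ((((⨆ i, h.eigenvalues i) ^ (2 * s - 2 * t) : ℝ) : ℂ) • smean A B t) :=
  smean_near_order_range_general A B hA hB h t s hts
end
end
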